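/- If α and β are commuting automorphisms of the Heawood graph such that α, β, and αβ each have order 2 (so that {1, α, β, αβ} is a Klein four-subgroup of the automorphism group), then at least one of α, β, αβ fixes both endpoints of some edge of the Heawood graph; in particular, at least one of α, β, αβ fixes a vertex. -/

import Mathlib

/-- The Heawood graph `C₁₄` on vertex set `ZMod 14`: distinct vertices `i` and `j` are
adjacent iff `j = i ± 1`, or `i` is even and `j = i + 5`, or `i` is odd and `j = i - 5`
(LCF notation `[5, -5]⁷`). -/
def heawood : SimpleGraph (ZMod 14) where
  Adj i j := i ≠ j ∧ (j = i + 1 ∨ j = i - 1 ∨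
    (i.val % 2 = 0 ∧ j = i + 5) ∨ (i.val % 2 = 1 ∧ j = i - 5))
  symm := by constructor; intro i j h; revert i j; decide
  loopless := by constructor; intro i h; revert i h; decide

/-! The Heawood graph is connected and bipartite, its colour classes being the even and the odd
vertices, so every automorphism either preserves or swaps the two classes, and swapping is
additive under composition (a homomorphism to `ZMod 2`). Hence one of `α`, `β`, `α * β`
preserves the classes. An involution preserving them permutes the 7 even vertices, so it fixes
one of them, `u`; it then permutes the 3 neighbours of `u`, so it fixes one of those too. -/

theorem Finset.exists_fixed_of_involutive_of_odd_card {α : Type*} [DecidableEq α] {f : α → α}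
    (hf : Function.Involutive f) {s : Finset α} (hs : ∀ x ∈ s, f x ∈ s) (hodd : Odd s.card) :
    ∃ x ∈ s, f x = x := by
  let g : Function.End s := fun x => ⟨f x, hs x x.2⟩
  have hg : g ^ 2 ^ 1 = 1 := funext fun x => Subtype.ext (hf x)
  have hcard := Equiv.Perm.card_fixedPoints_modEq (p := 2) hg
  rw [Fintype.card_coe] at hcard
  obtain ⟨⟨x, hx⟩, hfix⟩ : (Function.fixedPoints g).Nonempty := by
    rw [← Set.nonempty_coe_sort, ← Fintype.card_pos_iff]
    have := Nat.odd_iff.mp hodd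
    unfold Nat.ModEq at hcard
    omega
  exact ⟨x, hx, congrArg Subtype.val hfix⟩

namespace SimpleGraph

variable {V : Type*} {G : SimpleGraph V}

theorem Iso.involutive_of_orderOf_eq_two {γ : G ≃g G} (h : orderOf γ = 2) :
    Function.Involutive γ := fun v => by
  have hγ := pow_orderOf_eq_one γ
  rw [h, sq] at hγ
  exact DFunLike.congr_fun hγ v

theorem Iso.exists_adj_fixed_of_involutive [Fintype V] [DecidableEq V] [DecidableRel G.Adj]
    (γ : G ≃g G) (hγ : Function.Involutive γ) {s : Finset V} (hs : ∀ v ∈ s, γ v ∈ s)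
    (hodd : Odd s.card) (hdeg : ∀ v ∈ s, Odd (G.degree v)) :
    ∃ u v, G.Adj u v ∧ γ u = u ∧ γ v = v := by
  obtain ⟨u, hu, hγu⟩ := s.exists_fixed_of_involutive_of_odd_card hγ hs hodd
  have hnbr : ∀ v ∈ G.neighborFinset u, γ v ∈ G.neighborFinset u := fun v hv => by
    rw [mem_neighborFinset] at hv ⊢
    simpa [hγu] using γ.map_adj_iff.mpr hv
  obtain ⟨v, hv, hγv⟩ := (G.neighborFinset u).exists_fixed_of_involutive_of_odd_card hγ hnbr
    (by rw [card_neighborFinset_eq_degree]; exact hdeg u hu)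
  exact ⟨u, v, (mem_neighborFinset G u v).mp hv, hγu, hγv⟩

theorem Connected.coloring_hom_sub_eq (hG : G.Connected) (C : G.Coloring (ZMod 2))
    (f : G →g G) (u v : V) : C (f v) - C v = C (f u) - C u := by
  have hZ2 : ∀ x y x' y' : ZMod 2, x ≠ y → x' ≠ y' → y' - y = x' - x := by decide
  have step : ∀ {a b}, G.Adj a b → C (f b) - C b = C (f a) - C a := fun hab =>
    hZ2 _ _ _ _ (C.valid hab) (C.valid (f.map_adj hab))
  obtain ⟨p⟩ := hG u v
  induction p with
  | nil => rfl
  | cons hab _ ih => exact ih.trans (step hab)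

end SimpleGraph

instance : DecidableRel heawood.Adj := fun _ _ =>
  inferInstanceAs (Decidable (_ ∧ _))

def heawoodParity : heawood.Coloring (ZMod 2) :=
  SimpleGraph.Coloring.mk (fun v => (v.val : ZMod 2)) fun {v w} => by revert v w; decide

theorem heawood_adj_add_one (i : ZMod 14) : heawood.Adj i (i + 1) := by revert i; decide

theorem heawood_connected : heawood.Connected := by
  have hreach (n : ℕ) : heawood.Reachable 0 n := by
    induction n with
    | zero => simp
    | succ n ih =>
      rw [Nat.cast_succ]
      exact ih.trans (heawood_adj_add_one _).reachable
  exact .mk fun u v => by simpa using (hreach u.val).symm.trans (hreach v.val)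

theorem heawood_degree_eq_three (v : ZMod 14) : heawood.degree v = 3 := by revert v; decide

theorem heawoodParity_apply_iso (γ : heawood ≃g heawood) (v : ZMod 14) :
    heawoodParity (γ v) = heawoodParity v + heawoodParity (γ 0) := by
  have := heawood_connected.coloring_hom_sub_eq heawoodParity γ.toHom 0 v
  have h0 : heawoodParity 0 = 0 := rfl
  rw [h0, sub_zero] at this
  exact eq_add_of_sub_eq' this

theorem heawood_exists_fixed_edge_of_involutive (γ : heawood ≃g heawood)
    (hγ : Function.Involutive γ) (hpar : heawoodParity (γ 0) = 0) :
    ∃ u v, heawood.Adj u v ∧ γ u = u ∧ γ v = v := by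
  refine γ.exists_adj_fixed_of_involutive hγ (s := {v | heawoodParity v = 0}) ?_ (by decide)
    fun v _ => by rw [heawood_degree_eq_three]; decide
  intro v hv
  simp only [Finset.mem_filter, Finset.mem_univ, true_and] at hv ⊢
  rw [heawoodParity_apply_iso, hv, hpar, add_zero]

theorem heawood_klein_four_fixes_edge_general (α β : heawood ≃g heawood)
    (hα : orderOf α = 2) (hβ : orderOf β = 2)
    (hαβ : orderOf (α * β) = 2) :
    (∃ γ ∈ ({α, β, α * β} : Set (heawood ≃g heawood)),
        ∃ u v : ZMod 14, heawood.Adj u v ∧ γ u = u ∧ γ v = v) ∧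
      ∃ γ ∈ ({α, β, α * β} : Set (heawood ≃g heawood)), ∃ u : ZMod 14, γ u = u := by
  have hprod : heawoodParity ((α * β) 0) = heawoodParity (β 0) + heawoodParity (α 0) :=
    heawoodParity_apply_iso α (β 0)
  have hpreserving : ∃ γ ∈ ({α, β, α * β} : Set (heawood ≃g heawood)),
      orderOf γ = 2 ∧ heawoodParity (γ 0) = 0 := by
    have hZ2 : ∀ a b : ZMod 2, a = 0 ∨ b = 0 ∨ b + a = 0 := by decide
    rcases hZ2 (heawoodParity (α 0)) (heawoodParity (β 0)) with h | h | h
    · exact ⟨α, by simp, hα, h⟩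
    · exact ⟨β, by simp, hβ, h⟩
    · exact ⟨α * β, by simp, hαβ, hprod.trans h⟩
  obtain ⟨γ, hγ, hord, hpar⟩ := hpreserving
  obtain ⟨u, v, huv, hu, hv⟩ := heawood_exists_fixed_edge_of_involutive γ
    (SimpleGraph.Iso.involutive_of_orderOf_eq_two hord) hpar
  exact ⟨⟨γ, hγ, u, v, huv, hu, hv⟩, γ, hγ, u, hu⟩

/-- If `α` and `β` are commuting automorphisms of the Heawood graph such that `α`, `β`,
and `α * β` each have order 2, then at least one of `α`, `β`, `α * β` fixes both
endpoints of some edge of the Heawood graph; in particular at least one of them fixes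
a vertex. -/
theorem heawood_klein_four_fixes_edge (α β : heawood ≃g heawood)
    (hcomm : Commute α β) (hα : orderOf α = 2) (hβ : orderOf β = 2)
    (hαβ : orderOf (α * β) = 2) :
    (∃ γ ∈ ({α, β, α * β} : Set (heawood ≃g heawood)),
        ∃ u v : ZMod 14, heawood.Adj u v ∧ γ u = u ∧ γ v = v) ∧
      ∃ γ ∈ ({α, β, α * β} : Set (heawood ≃g heawood)), ∃ u : ZMod 14, γ u = u :=
  heawood_klein_four_fixes_edge_general α β hα hβ hαβ
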